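/- Fix an integer d ≥ 1, p ∈ (1,∞), a penalty function φ, and let (μ_t)_{t≥0} be a convolution semigroup in 𝒫_p(ℝ^d) with 𝒲_p(μ_t, δ_0) → 0 as t ↓ 0. Then for every f ∈ C₀(ℝ^d) and every sequence (t_n)_{n∈ℕ} in [0,∞) with t_n → 0, one has lim_{n→∞} ‖𝒮^n(t_n)f − f‖_∞ = 0. -/

import Mathlib

open MeasureTheory Filter Topology ENNReal NNReal Set ZeroAtInfty
noncomputable section

/-- Euclidean space ℝ^d. -/
abbrev Ed (d : ℕ) := EuclideanSpace ℝ (Fin d)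

/-- `𝒫_p(ℝ^d)`: Borel probability measures with finite `p`-th moment. -/
def MemPp {d : ℕ} (p : ℝ) (μ : Measure (Ed d)) : Prop :=
  IsProbabilityMeasure μ ∧ ∫⁻ x, (‖x‖₊ : ℝ≥0∞) ^ p ∂μ < ∞

/-- `γ` is a coupling of `μ` and `ν`. -/
def IsCoupling {d : ℕ} (γ : Measure (Ed d × Ed d)) (μ ν : Measure (Ed d)) : Prop :=
  γ.map Prod.fst = μ ∧ γ.map Prod.snd = ν

/-- The `p`-Wasserstein distance `𝒲_p(μ, ν)`. -/
def Wp {d : ℕ} (p : ℝ) (μ ν : Measure (Ed d)) : ℝ :=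
  (⨅ γ ∈ {γ : Measure (Ed d × Ed d) | IsCoupling γ μ ν},
    (∫⁻ q, (‖q.2 - q.1‖₊ : ℝ≥0∞) ^ p ∂γ) ^ (1 / p)).toReal

/-- The scaled penalty `φ_t(r) = t·φ(r/t)` for `t > 0`; `φ_0(0) = 0`, `φ_0(r) = ∞` for `r > 0`. -/
def phit (φ : ℝ≥0 → ℝ≥0∞) (t : ℝ) (r : ℝ≥0) : ℝ≥0∞ :=
  if 0 < t then (t.toNNReal : ℝ≥0∞) * φ (r / t.toNNReal) else (if r = 0 then 0 else ∞)

/-- `φ` is a penalty function: lower semicontinuous, convex, increasing, not constant,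
`φ(0) = 0`, and `x ↦ φ(x^{1/p})` is convex. -/
structure IsPenalty (p : ℝ) (φ : ℝ≥0 → ℝ≥0∞) : Prop where
  lsc : LowerSemicontinuous φ
  convex : ∀ a b l m : ℝ≥0, l + m = 1 →
    φ (l * a + m * b) ≤ (l : ℝ≥0∞) * φ a + (m : ℝ≥0∞) * φ b
  mono : Monotone φ
  not_const : ∃ a b, φ a ≠ φ b
  map_zero : φ 0 = 0
  convex_rpow : ∀ a b l m : ℝ≥0, l + m = 1 →
    φ ((l * a + m * b) ^ (1 / p)) ≤ (l : ℝ≥0∞) * φ (a ^ (1 / p)) + (m : ℝ≥0∞) * φ (b ^ (1 / p))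

/-- The convex conjugate `φ*(y) = sup_{x ≥ 0} (xy − φ(x))`. -/
def phiStar (φ : ℝ≥0 → ℝ≥0∞) (y : ℝ≥0) : ℝ≥0∞ :=
  ⨆ x : ℝ≥0, ((x * y : ℝ≥0) : ℝ≥0∞) - φ x

/-- The one-step operator `S(t)f(x) = sup_ν ( ∫ f(x+y) ν(dy) − φ_t(𝒲_p(μ_t, ν)) )`. -/
def Sop {d : ℕ} (p : ℝ) (φ : ℝ≥0 → ℝ≥0∞) (μt : Measure (Ed d)) (t : ℝ)
    (f : Ed d → ℝ) (x : Ed d) : ℝ :=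
  sSup { r : ℝ | ∃ ν : Measure (Ed d), MemPp p ν ∧ ∃ c : ℝ, 0 ≤ c ∧
    phit φ t (Wp p μt ν).toNNReal ≤ ENNReal.ofReal c ∧ r = (∫ y, f (x + y) ∂ν) - c }

/-- The iterated operator `𝒮ⁿ(t) = S(2⁻ⁿ)^{∘ k} ∘ S(t − k·2⁻ⁿ)`, `k = ⌊2ⁿ t⌋`. -/
def SiterN {d : ℕ} (p : ℝ) (φ : ℝ≥0 → ℝ≥0∞) (μ : ℝ → Measure (Ed d)) (n : ℕ) (t : ℝ)
    (f : Ed d → ℝ) : Ed d → ℝ :=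
  (fun g => Sop p φ (μ ((2 : ℝ) ^ n)⁻¹) ((2 : ℝ) ^ n)⁻¹ g)^[⌊(2:ℝ)^n * t⌋₊]
    (Sop p φ (μ (t - ⌊(2:ℝ)^n * t⌋₊ * ((2:ℝ)^n)⁻¹)) (t - ⌊(2:ℝ)^n * t⌋₊ * ((2:ℝ)^n)⁻¹) f)

/-- The limiting operator `𝒮(t)f = lim_n 𝒮ⁿ(t)f` (a decreasing limit, i.e. an infimum). -/
def Slim {d : ℕ} (p : ℝ) (φ : ℝ≥0 → ℝ≥0∞) (μ : ℝ → Measure (Ed d)) (t : ℝ)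
    (f : Ed d → ℝ) (x : Ed d) : ℝ :=
  ⨅ n : ℕ, SiterN p φ μ n t f x

/-- `f ∈ C₀(ℝ^d)`: continuous and vanishing at infinity. -/
def IsC0 {d : ℕ} (f : Ed d → ℝ) : Prop :=
  Continuous f ∧ Tendsto f (cocompact (Ed d)) (𝓝 0)

/-- `(μ_t)_{t ≥ 0}` is a convolution semigroup in `𝒫_p(ℝ^d)`. -/
def IsConvSemigroup {d : ℕ} (p : ℝ) (μ : ℝ → Measure (Ed d)) : Prop :=
  μ 0 = Measure.dirac 0 ∧ (∀ s t : ℝ, 0 ≤ s → 0 ≤ t → μ (s + t) = (μ s).conv (μ t)) ∧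
    ∀ t : ℝ, 0 ≤ t → MemPp p (μ t)

/-- `𝒲_p(μ_t, δ_0) → 0` as `t ↓ 0`. -/
def WContinuousAtZero {d : ℕ} (p : ℝ) (μ : ℝ → Measure (Ed d)) : Prop :=
  Tendsto (fun t => Wp p (μ t) (Measure.dirac 0)) (𝓝[>] (0:ℝ)) (𝓝 0)

/-- The semigroup of the underlying Lévy process, `S^μ(t)f(x) = ∫ f(x+y) μ_t(dy)`. -/
def Smu {d : ℕ} (μ : ℝ → Measure (Ed d)) (t : ℝ) (f : Ed d → ℝ) (x : Ed d) : ℝ :=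
  ∫ y, f (x + y) ∂(μ t)

/-- `f ∈ D(A^μ)` with `A^μ f = Af`: `(S^μ(t)f − f)/t → Af` uniformly as `t ↓ 0`. -/
def HasGenerator {d : ℕ} (μ : ℝ → Measure (Ed d)) (f Af : Ed d → ℝ) : Prop :=
  TendstoUniformly (fun t x => (Smu μ t f x - f x) / t) Af (𝓝[>] (0:ℝ))

/-- `f ∈ C₀¹(ℝ^d)`: continuously differentiable, vanishing at infinity, with gradient
vanishing at infinity. -/
def IsC01 {d : ℕ} (f : Ed d → ℝ) : Prop :=
  IsC0 f ∧ ContDiff ℝ 1 f ∧ Tendsto (fun x => gradient f x) (cocompact (Ed d)) (𝓝 0)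

/-!
Approximate `f` within `ε` by an `L`-Lipschitz function `g` (an inf-convolution). Every step
`S(σ)` is monotone and commutes with translations, hence is a sup-norm contraction that preserves
uniform continuity and `L`-Lipschitz continuity; so `‖𝒮ⁿ(t)f − 𝒮ⁿ(t)g‖_∞ ≤ ε`. For `L`-Lipschitz
functions the Kantorovich bound `∫ g dν − ∫ g dμ_σ ≤ L 𝒲_p(μ_σ, ν)` and Young's inequality
`L w ≤ φ_σ(w) + σ φ*(L)` give `S^μ(σ) ≤ S(σ) ≤ S^μ(σ) + σ φ*(L)`, with `S^μ` the linear semigroup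
of `(μ_t)`. Hence `‖𝒮ⁿ(t)g − S^μ(t)g‖_∞ ≤ t φ*(L)` and `‖S^μ(t)g − g‖_∞ ≤ L 𝒲_p(μ_t, δ_0)`,
both of which vanish along `t_n → 0`; `φ*(L)` is finite since `φ` grows like `x^p` with `p > 1`.
-/

section IntegralShift

variable {E : Type*} [NormedAddCommGroup E] [MeasurableSpace E]
  {ν : Measure E} {g h : E → ℝ} {B C : ℝ}

lemma integrable_comp_const_add [OpensMeasurableSpace E] [IsFiniteMeasure ν] (hg : Continuous g)
    (hgB : ∀ y, |g y| ≤ B) (x : E) : Integrable (fun y => g (x + y)) ν :=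
  .of_bound (hg.comp (continuous_const_add x)).aestronglyMeasurable B
    (ae_of_all _ fun y => by simpa using hgB (x + y))

lemma abs_integral_comp_const_add_le [IsProbabilityMeasure ν] (hgB : ∀ y, |g y| ≤ B) (x : E) :
    |∫ y, g (x + y) ∂ν| ≤ B := by
  simpa using norm_integral_le_of_norm_le_const (μ := ν)
    (ae_of_all _ fun y => (Real.norm_eq_abs _).trans_le (hgB (x + y)))

lemma integral_comp_const_add_le_add [OpensMeasurableSpace E] [IsProbabilityMeasure ν]
    (hg : Continuous g) (hgB : ∀ y, |g y| ≤ B) (hh : Continuous h) (hhC : ∀ y, |h y| ≤ C)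
    {x x' : E} {a : ℝ} (hle : ∀ y, g (x + y) ≤ h (x' + y) + a) :
    ∫ y, g (x + y) ∂ν ≤ ∫ y, h (x' + y) ∂ν + a := by
  have hint := integrable_comp_const_add (ν := ν) hh hhC x'
  calc ∫ y, g (x + y) ∂ν ≤ ∫ y, (h (x' + y) + a) ∂ν :=
        integral_mono (integrable_comp_const_add hg hgB x) (hint.add (integrable_const a)) hle
    _ = ∫ y, h (x' + y) ∂ν + a := by simp [integral_add hint (integrable_const a)]

end IntegralShift

section Wasserstein

variable {d : ℕ} {p : ℝ}

def Wpe (p : ℝ) (μ ν : Measure (Ed d)) : ℝ≥0∞ :=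
  ⨅ γ ∈ {γ : Measure (Ed d × Ed d) | IsCoupling γ μ ν},
    (∫⁻ q, (‖q.2 - q.1‖₊ : ℝ≥0∞) ^ p ∂γ) ^ (1 / p)

lemma Wp_eq_toReal (p : ℝ) (μ ν : Measure (Ed d)) : Wp p μ ν = (Wpe p μ ν).toReal := rfl

lemma transportCost_eq_eLpNorm (hp : 0 < p) (γ : Measure (Ed d × Ed d)) :
    (∫⁻ q, (‖q.2 - q.1‖₊ : ℝ≥0∞) ^ p ∂γ) ^ (1 / p) =
      eLpNorm (fun q : Ed d × Ed d => q.2 - q.1) (ENNReal.ofReal p) γ := by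
  rw [eLpNorm_eq_lintegral_rpow_enorm_toReal (by simpa using hp) ofReal_ne_top,
    ENNReal.toReal_ofReal hp.le]
  rfl

lemma eLpNorm_id_lt_top_of_memPp (hp : 0 < p) {μ : Measure (Ed d)} (hμ : MemPp p μ) :
    eLpNorm id (ENNReal.ofReal p) μ < ∞ := by
  rw [eLpNorm_eq_lintegral_rpow_enorm_toReal (by simpa using hp) ofReal_ne_top,
    ENNReal.toReal_ofReal hp.le]
  exact ENNReal.rpow_lt_top_of_nonneg (by positivity) hμ.2.ne

lemma IsCoupling.eLpNorm_fst {γ : Measure (Ed d × Ed d)} {μ ν : Measure (Ed d)}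
    (h : IsCoupling γ μ ν) (q : ℝ≥0∞) : eLpNorm Prod.fst q γ = eLpNorm id q μ := by
  rw [← h.1, eLpNorm_map_measure aestronglyMeasurable_id measurable_fst.aemeasurable]
  rfl

lemma IsCoupling.eLpNorm_snd {γ : Measure (Ed d × Ed d)} {μ ν : Measure (Ed d)}
    (h : IsCoupling γ μ ν) (q : ℝ≥0∞) : eLpNorm Prod.snd q γ = eLpNorm id q ν := by
  rw [← h.2, eLpNorm_map_measure aestronglyMeasurable_id measurable_snd.aemeasurable]
  rfl

lemma isCoupling_prod (μ ν : Measure (Ed d)) [IsProbabilityMeasure μ] [IsProbabilityMeasure ν] :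
    IsCoupling (μ.prod ν) μ ν :=
  ⟨by simp, by simp⟩

lemma isCoupling_map_diag (μ : Measure (Ed d)) :
    IsCoupling (μ.map fun x => (x, x)) μ μ := by
  constructor <;> rw [Measure.map_map (by fun_prop) (by fun_prop)] <;> simp [Function.comp_def]

lemma Wpe_self (hp : 0 < p) (μ : Measure (Ed d)) : Wpe p μ μ = 0 := by
  refine le_antisymm ?_ zero_le
  refine (iInf₂_le (μ.map fun x => (x, x)) (isCoupling_map_diag μ)).trans ?_
  rw [lintegral_map (by fun_prop) (by fun_prop)]
  simp [ENNReal.zero_rpow_of_pos hp, hp]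

lemma Wp_self (hp : 0 < p) (μ : Measure (Ed d)) : Wp p μ μ = 0 := by
  simp [Wp_eq_toReal, Wpe_self hp]

lemma Wpe_lt_top (hp : 1 ≤ p) {μ ν : Measure (Ed d)} (hμ : MemPp p μ) (hν : MemPp p ν) :
    Wpe p μ ν < ∞ := by
  have := hμ.1; have := hν.1
  have hp0 : 0 < p := by linarith
  refine (iInf₂_le (μ.prod ν) (isCoupling_prod μ ν)).trans_lt ?_
  rw [transportCost_eq_eLpNorm hp0]
  calc eLpNorm (fun q : Ed d × Ed d => q.2 - q.1) (ENNReal.ofReal p) (μ.prod ν)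
      ≤ eLpNorm Prod.snd (ENNReal.ofReal p) (μ.prod ν) +
          eLpNorm Prod.fst (ENNReal.ofReal p) (μ.prod ν) :=
        eLpNorm_sub_le (by fun_prop) (by fun_prop) (by simpa using hp)
    _ < ∞ := by
        rw [(isCoupling_prod μ ν).eLpNorm_snd, (isCoupling_prod μ ν).eLpNorm_fst]
        exact ENNReal.add_lt_top.2
          ⟨eLpNorm_id_lt_top_of_memPp hp0 hν, eLpNorm_id_lt_top_of_memPp hp0 hμ⟩

lemma IsCoupling.isProbabilityMeasure {γ : Measure (Ed d × Ed d)} {μ ν : Measure (Ed d)}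
    (h : IsCoupling γ μ ν) [IsProbabilityMeasure μ] : IsProbabilityMeasure γ := by
  have : IsProbabilityMeasure (γ.map Prod.fst) := h.1 ▸ ‹_›
  exact Measure.isProbabilityMeasure_of_map Prod.fst

lemma IsCoupling.integral_sub_eq {γ : Measure (Ed d × Ed d)} {μ ν : Measure (Ed d)}
    (h : IsCoupling γ μ ν) [IsProbabilityMeasure μ] {g : Ed d → ℝ} {B : ℝ} (hg : Continuous g)
    (hgB : ∀ y, |g y| ≤ B) (x : Ed d) :
    ∫ y, g (x + y) ∂ν - ∫ y, g (x + y) ∂μ = ∫ q, (g (x + q.2) - g (x + q.1)) ∂γ := by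
  have := h.isProbabilityMeasure
  have hint (f : Ed d × Ed d → Ed d) (hf : Continuous f) :
      Integrable (fun q => g (x + f q)) γ :=
    .of_bound (by fun_prop) B (ae_of_all _ fun q => by simpa using hgB (x + f q))
  rw [integral_sub (hint _ continuous_snd) (hint _ continuous_fst), ← h.1, ← h.2,
    integral_map measurable_fst.aemeasurable (by fun_prop),
    integral_map measurable_snd.aemeasurable (by fun_prop)]

/-- Kantorovich–Rubinstein bound, with `𝒲₁ ≤ 𝒲_p`. -/
lemma abs_integral_sub_le_mul_Wp (hp : 1 ≤ p) {μ ν : Measure (Ed d)} (hμ : MemPp p μ)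
    (hν : MemPp p ν) {g : Ed d → ℝ} {L : ℝ≥0} (hg : LipschitzWith L g) {B : ℝ}
    (hgB : ∀ y, |g y| ≤ B) (x : Ed d) :
    |∫ y, g (x + y) ∂ν - ∫ y, g (x + y) ∂μ| ≤ L * Wp p μ ν := by
  have := hμ.1; have := hν.1
  have hp0 : 0 < p := by linarith
  have hcoupling (γ : Measure (Ed d × Ed d)) (hγ : IsCoupling γ μ ν) :
      ‖∫ y, g (x + y) ∂ν - ∫ y, g (x + y) ∂μ‖ₑ ≤
        L * eLpNorm (fun q : Ed d × Ed d => q.2 - q.1) (ENNReal.ofReal p) γ := by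
    have := hγ.isProbabilityMeasure
    rw [hγ.integral_sub_eq hg.continuous hgB x]
    calc ‖∫ q, (g (x + q.2) - g (x + q.1)) ∂γ‖ₑ
        ≤ ∫⁻ q, ‖g (x + q.2) - g (x + q.1)‖ₑ ∂γ := enorm_integral_le_lintegral_enorm _
      _ ≤ ∫⁻ q, L * ‖q.2 - q.1‖ₑ ∂γ := lintegral_mono fun q => by
          simpa [edist_eq_enorm_sub] using hg.edist_le_mul (x + q.2) (x + q.1)
      _ = L * eLpNorm (fun q : Ed d × Ed d => q.2 - q.1) 1 γ := by
          rw [lintegral_const_mul' _ _ coe_ne_top, eLpNorm_one_eq_lintegral_enorm]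
      _ ≤ L * eLpNorm (fun q : Ed d × Ed d => q.2 - q.1) (ENNReal.ofReal p) γ := by
          gcongr
          exact eLpNorm_le_eLpNorm_of_exponent_le (by simpa using hp) (by fun_prop)
  have hWpe : ‖∫ y, g (x + y) ∂ν - ∫ y, g (x + y) ∂μ‖ₑ ≤ L * Wpe p μ ν := by
    rcases eq_or_ne L 0 with rfl | hL
    · simpa using hcoupling _ (isCoupling_prod μ ν)
    simp_rw [Wpe, ENNReal.mul_iInf_of_ne (by simpa using hL) coe_ne_top]
    refine le_iInf₂ fun γ hγ => ?_
    rw [transportCost_eq_eLpNorm hp0]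
    exact hcoupling γ hγ
  simpa [Wp_eq_toReal, toReal_mul] using
    ENNReal.toReal_mono (mul_ne_top coe_ne_top (Wpe_lt_top hp hμ hν).ne) hWpe

end Wasserstein

section Penalty

variable {p : ℝ} {φ : ℝ≥0 → ℝ≥0∞}

lemma coe_mul_le_phiStar_add (φ : ℝ≥0 → ℝ≥0∞) (x y : ℝ≥0) :
    ((x * y : ℝ≥0) : ℝ≥0∞) ≤ phiStar φ y + φ x :=
  tsub_le_iff_right.1 (le_iSup (fun x : ℝ≥0 => ((x * y : ℝ≥0) : ℝ≥0∞) - φ x) x)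

/-- The convexity of `x ↦ φ (x ^ (1 / p))` is what gives `p`-power growth. -/
lemma IsPenalty.le_rpow_div_mul (hp : 0 < p) (hφ : IsPenalty p φ) {x₀ x : ℝ≥0} (hx : x₀ ≤ x)
    (hx₀ : 0 < x₀) : φ x₀ ≤ ((x₀ / x) ^ p : ℝ≥0) * φ x := by
  have hx0 : 0 < x := hx₀.trans_le hx
  have hm : (x₀ / x) ^ p ≤ 1 := NNReal.rpow_le_one (div_le_one_of_le₀ hx zero_le) hp.le
  have h := hφ.convex_rpow 0 (x ^ p) (1 - (x₀ / x) ^ p) ((x₀ / x) ^ p) (tsub_add_cancel_of_le hm)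
  have hroot (y : ℝ≥0) : (y ^ p) ^ (1 / p) = y := by
    rw [← NNReal.rpow_mul, mul_one_div_cancel hp.ne', NNReal.rpow_one]
  rwa [mul_zero, zero_add, ← NNReal.mul_rpow, div_mul_cancel₀ _ hx0.ne', hroot, hroot,
    NNReal.zero_rpow (by positivity), hφ.map_zero, mul_zero, zero_add] at h

lemma IsPenalty.exists_coe_mul_rpow_le (hp : 0 < p) (hφ : IsPenalty p φ) :
    ∃ c : ℝ≥0, 0 < c ∧ ∃ x₀ : ℝ≥0, ∀ x, x₀ ≤ x → ((c * x ^ p : ℝ≥0) : ℝ≥0∞) ≤ φ x := by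
  obtain ⟨x₀, hx₀⟩ : ∃ x₀, φ x₀ ≠ 0 := by
    by_contra! h
    obtain ⟨a, b, hab⟩ := hφ.not_const
    exact hab (by rw [h a, h b])
  have hx₀pos : 0 < x₀ := pos_of_ne_zero fun h => hx₀ (h ▸ hφ.map_zero)
  obtain ⟨m, hm0, hm⟩ := ENNReal.lt_iff_exists_nnreal_btwn.1 (pos_iff_ne_zero.2 hx₀)
  refine ⟨m / x₀ ^ p, div_pos (by exact_mod_cast hm0) (NNReal.rpow_pos hx₀pos), x₀,
    fun x hx => ?_⟩
  have hpos : 0 < (x₀ / x) ^ p := NNReal.rpow_pos (div_pos hx₀pos (hx₀pos.trans_le hx))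
  have h : (m : ℝ≥0∞) / ((x₀ / x) ^ p : ℝ≥0) ≤ φ x :=
    (ENNReal.div_le_iff_le_mul (.inl (by simpa using hpos.ne')) (.inl coe_ne_top)).2 <| by
      rw [mul_comm]; exact hm.le.trans (hφ.le_rpow_div_mul hp hx hx₀pos)
  refine le_of_eq_of_le ?_ h
  rw [← ENNReal.coe_div hpos.ne', NNReal.div_rpow]
  congr 1
  field_simp

lemma IsPenalty.phiStar_lt_top (hp : 1 < p) (hφ : IsPenalty p φ) (L : ℝ≥0) :
    phiStar φ L < ∞ := by
  obtain ⟨c, hc, x₀, hgrowth⟩ := hφ.exists_coe_mul_rpow_le (by linarith)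
  have hsuper : Tendsto (fun x : ℝ≥0 => c * x ^ (p - 1)) atTop atTop :=
    (NNReal.tendsto_rpow_atTop (by linarith)).const_mul_atTop hc
  obtain ⟨R, hR⟩ := ((hsuper.eventually_ge_atTop L).and
    ((eventually_gt_atTop 0).and (eventually_ge_atTop x₀))).exists_forall_of_atTop
  refine lt_of_le_of_lt (iSup_le fun x => tsub_le_iff_right.2 ?_) (coe_lt_top (r := L * R))
  rcases le_total x R with hxR | hRx
  · exact le_add_right (by rw [mul_comm]; gcongr)
  obtain ⟨hLR, hx0, hx₀R⟩ := hR x hRx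
  rw [NNReal.rpow_sub_one hx0.ne'] at hLR
  calc ((x * L : ℝ≥0) : ℝ≥0∞) ≤ ((x * (c * (x ^ p / x)) : ℝ≥0) : ℝ≥0∞) := by gcongr
    _ = ((c * x ^ p : ℝ≥0) : ℝ≥0∞) := by congr 1; field_simp
    _ ≤ φ x := hgrowth x hx₀R
    _ ≤ _ := le_add_self

lemma coe_mul_le_phit_add (φ : ℝ≥0 → ℝ≥0∞) (L w : ℝ≥0) {t : ℝ} (ht : 0 ≤ t) :
    ((L * w : ℝ≥0) : ℝ≥0∞) ≤ phit φ t w + ENNReal.ofReal t * phiStar φ L := by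
  rcases ht.lt_or_eq with ht | rfl
  · have htN : 0 < t.toNNReal := Real.toNNReal_pos.2 ht
    rw [phit, if_pos ht, ENNReal.ofReal, ← mul_add]
    calc ((L * w : ℝ≥0) : ℝ≥0∞) = t.toNNReal * ((w / t.toNNReal * L : ℝ≥0) : ℝ≥0∞) := by
          rw [← ENNReal.coe_mul]; congr 1; field_simp
      _ ≤ t.toNNReal * (φ (w / t.toNNReal) + phiStar φ L) := by
          rw [add_comm]; gcongr; exact coe_mul_le_phiStar_add φ _ _
  · rcases eq_or_ne w 0 with rfl | hw
    · simp
    · simp [phit, hw]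

lemma toReal_mul_le_of_phit_le {L : ℝ≥0} (hL : phiStar φ L ≠ ∞) {t w c : ℝ}
    (ht : 0 ≤ t) (hw : 0 ≤ w) (hc : 0 ≤ c) (h : phit φ t w.toNNReal ≤ ENNReal.ofReal c) :
    L * w ≤ c + t * (phiStar φ L).toReal := by
  have h' := (coe_mul_le_phit_add φ L w.toNNReal ht).trans (add_le_add_left h _)
  have := ENNReal.toReal_mono (by finiteness) h'
  rwa [ENNReal.toReal_add (by finiteness) (by finiteness), toReal_mul, toReal_ofReal hc,
    toReal_ofReal ht, coe_toReal, NNReal.coe_mul, Real.coe_toNNReal _ hw] at this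

lemma phit_zero_right (hφ0 : φ 0 = 0) (t : ℝ) : phit φ t 0 = 0 := by
  simp [phit, hφ0]

end Penalty

section Sop

variable {d : ℕ} {p : ℝ} {φ : ℝ≥0 → ℝ≥0∞} {μt : Measure (Ed d)} {t : ℝ} {g h : Ed d → ℝ}
  {B C : ℝ}

lemma le_Sop (hgB : ∀ y, |g y| ≤ B) {ν : Measure (Ed d)} (hν : MemPp p ν) {c : ℝ} (hc : 0 ≤ c)
    (hcν : phit φ t (Wp p μt ν).toNNReal ≤ ENNReal.ofReal c) (x : Ed d) :
    ∫ y, g (x + y) ∂ν - c ≤ Sop p φ μt t g x := by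
  refine le_csSup ⟨B, ?_⟩ ⟨ν, hν, c, hc, hcν, rfl⟩
  rintro _ ⟨ν', hν', c', hc', -, rfl⟩
  have := hν'.1
  linarith [(abs_le.1 (abs_integral_comp_const_add_le (ν := ν') hgB x)).2]

lemma Sop_le_of_forall (hp : 0 < p) (hφ0 : φ 0 = 0) (hμt : MemPp p μt) {x : Ed d} {b : ℝ}
    (h : ∀ ν, MemPp p ν → ∀ c, 0 ≤ c → phit φ t (Wp p μt ν).toNNReal ≤ ENNReal.ofReal c →
      ∫ y, g (x + y) ∂ν - c ≤ b) :
    Sop p φ μt t g x ≤ b := by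
  refine csSup_le ⟨_, μt, hμt, 0, le_rfl, ?_, rfl⟩ ?_
  · simp [Wp_self hp, phit_zero_right hφ0]
  · rintro _ ⟨ν, hν, c, hc, hcν, rfl⟩
    exact h ν hν c hc hcν

lemma integral_le_Sop (hp : 0 < p) (hφ0 : φ 0 = 0) (hμt : MemPp p μt) (hgB : ∀ y, |g y| ≤ B)
    (x : Ed d) : ∫ y, g (x + y) ∂μt ≤ Sop p φ μt t g x := by
  simpa using le_Sop hgB hμt le_rfl (by simp [Wp_self hp, phit_zero_right hφ0]) x

lemma abs_Sop_le (hp : 0 < p) (hφ0 : φ 0 = 0) (hμt : MemPp p μt) (hgB : ∀ y, |g y| ≤ B)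
    (x : Ed d) : |Sop p φ μt t g x| ≤ B := by
  have := hμt.1
  refine abs_le.2 ⟨?_, Sop_le_of_forall hp hφ0 hμt fun ν hν c hc _ => ?_⟩
  · exact (abs_le.1 (abs_integral_comp_const_add_le hgB x)).1.trans
      (integral_le_Sop hp hφ0 hμt hgB x)
  · have := hν.1
    linarith [(abs_le.1 (abs_integral_comp_const_add_le (ν := ν) hgB x)).2]

lemma Sop_le_Sop_add (hp : 0 < p) (hφ0 : φ 0 = 0) (hμt : MemPp p μt) (hg : Continuous g)
    (hgB : ∀ y, |g y| ≤ B) (hh : Continuous h) (hhC : ∀ y, |h y| ≤ C) {x x' : Ed d} {a : ℝ}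
    (hle : ∀ y, g (x + y) ≤ h (x' + y) + a) :
    Sop p φ μt t g x ≤ Sop p φ μt t h x' + a :=
  Sop_le_of_forall hp hφ0 hμt fun ν hν c hc hcν => by
    have := hν.1
    have := integral_comp_const_add_le_add (ν := ν) hg hgB hh hhC hle
    linarith [le_Sop hhC hν hc hcν x']

lemma abs_Sop_sub_Sop_le (hp : 0 < p) (hφ0 : φ 0 = 0) (hμt : MemPp p μt) (hg : Continuous g)
    (hgB : ∀ y, |g y| ≤ B) (hh : Continuous h) (hhC : ∀ y, |h y| ≤ C) {η : ℝ}
    (hgh : ∀ y, |g y - h y| ≤ η) (x : Ed d) :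
    |Sop p φ μt t g x - Sop p φ μt t h x| ≤ η := by
  have h₁ := Sop_le_Sop_add (t := t) hp hφ0 hμt hg hgB hh hhC (x := x) (x' := x) (a := η)
    fun y => by linarith [(abs_le.1 (hgh (x + y))).2]
  have h₂ := Sop_le_Sop_add (t := t) hp hφ0 hμt hh hhC hg hgB (x := x) (x' := x) (a := η)
    fun y => by linarith [(abs_le.1 (hgh (x + y))).1]
  exact abs_sub_le_iff.2 ⟨by linarith, by linarith⟩

lemma Sop_lipschitzWith (hp : 0 < p) (hφ0 : φ 0 = 0) (hμt : MemPp p μt) {L : ℝ≥0}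
    (hg : LipschitzWith L g) (hgB : ∀ y, |g y| ≤ B) : LipschitzWith L (Sop p φ μt t g) :=
  .of_le_add_mul L fun x x' => Sop_le_Sop_add hp hφ0 hμt hg.continuous hgB hg.continuous hgB
    fun y => by simpa [dist_add_right] using hg.le_add_mul (x + y) (x' + y)

lemma Sop_uniformContinuous (hp : 0 < p) (hφ0 : φ 0 = 0) (hμt : MemPp p μt)
    (hg : UniformContinuous g) (hgB : ∀ y, |g y| ≤ B) : UniformContinuous (Sop p φ μt t g) := by
  refine Metric.uniformContinuous_iff.2 fun ε hε => ?_
  obtain ⟨δ, hδ, hδε⟩ := Metric.uniformContinuous_iff.1 hg (ε / 2) (half_pos hε)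
  refine ⟨δ, hδ, fun {x x'} hxx' => ?_⟩
  have hle (z z' : Ed d) (hzz' : dist z z' < δ) :
      Sop p φ μt t g z ≤ Sop p φ μt t g z' + ε / 2 :=
    Sop_le_Sop_add hp hφ0 hμt hg.continuous hgB hg.continuous hgB fun y => by
      have := hδε (show dist (z + y) (z' + y) < δ by rwa [dist_add_right])
      linarith [(abs_lt.1 (Real.dist_eq _ _ ▸ this)).2]
  have h₁ := hle x x' hxx'
  have h₂ := hle x' x (dist_comm x x' ▸ hxx')
  rw [Real.dist_eq, abs_sub_lt_iff]
  constructor <;> linarith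

lemma Sop_le_integral_add (hp : 1 ≤ p) (hφ0 : φ 0 = 0) (hμt : MemPp p μt) (ht : 0 ≤ t)
    {L : ℝ≥0} (hg : LipschitzWith L g) (hgB : ∀ y, |g y| ≤ B) (hL : phiStar φ L ≠ ∞)
    (x : Ed d) :
    Sop p φ μt t g x ≤ ∫ y, g (x + y) ∂μt + t * (phiStar φ L).toReal :=
  Sop_le_of_forall (by linarith) hφ0 hμt fun ν hν c hc hcν => by
    have hK := abs_integral_sub_le_mul_Wp hp hμt hν hg hgB x
    have := toReal_mul_le_of_phit_le (w := Wp p μt ν) hL ht ENNReal.toReal_nonneg hc hcν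
    linarith [(abs_le.1 hK).2]

end Sop

section Smu

variable {d : ℕ} {μ : ℝ → Measure (Ed d)} {t : ℝ} {g h : Ed d → ℝ} {B C : ℝ}

lemma abs_Smu_le [IsProbabilityMeasure (μ t)] (hgB : ∀ y, |g y| ≤ B) (x : Ed d) :
    |Smu μ t g x| ≤ B :=
  abs_integral_comp_const_add_le hgB x

lemma Smu_le_Smu_add [IsProbabilityMeasure (μ t)] (hg : Continuous g) (hgB : ∀ y, |g y| ≤ B)
    (hh : Continuous h) (hhC : ∀ y, |h y| ≤ C) {a : ℝ} (hle : ∀ y, g y ≤ h y + a) (x : Ed d) :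
    Smu μ t g x ≤ Smu μ t h x + a :=
  integral_comp_const_add_le_add hg hgB hh hhC fun y => hle (x + y)

lemma Smu_lipschitzWith [IsProbabilityMeasure (μ t)] {L : ℝ≥0} (hg : LipschitzWith L g)
    (hgB : ∀ y, |g y| ≤ B) : LipschitzWith L (Smu μ t g) :=
  .of_le_add_mul L fun x x' =>
    integral_comp_const_add_le_add hg.continuous hgB hg.continuous hgB
      fun y => by simpa [dist_add_right] using hg.le_add_mul (x + y) (x' + y)

lemma Smu_of_eq_dirac (hμt : μ t = Measure.dirac 0) (g : Ed d → ℝ) : Smu μ t g = g := by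
  ext x
  simp [Smu, hμt]

lemma Smu_add {s : ℝ} (hconv : μ (s + t) = (μ s).conv (μ t)) [IsProbabilityMeasure (μ s)]
    [IsProbabilityMeasure (μ t)] (hg : Continuous g) (hgB : ∀ y, |g y| ≤ B) (x : Ed d) :
    Smu μ (s + t) g x = Smu μ s (Smu μ t g) x := by
  have hint : Integrable (fun q : Ed d × Ed d => g (x + (q.1 + q.2))) ((μ s).prod (μ t)) :=
    .of_bound (by fun_prop) B (ae_of_all _ fun q => by simpa using hgB _)
  simp only [Smu, hconv, Measure.conv]
  rw [integral_map (by fun_prop) (by fun_prop), integral_prod _ hint]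
  simp only [add_assoc]

lemma abs_Smu_sub_le {p : ℝ} (hp : 1 ≤ p) (hμt : MemPp p (μ t)) {L : ℝ≥0}
    (hg : LipschitzWith L g) (hgB : ∀ y, |g y| ≤ B) (x : Ed d) :
    |Smu μ t g x - g x| ≤ L * Wp p (μ t) (Measure.dirac 0) := by
  have hδ : MemPp p (Measure.dirac (0 : Ed d)) :=
    ⟨inferInstance, by simp [ENNReal.zero_rpow_of_pos (by linarith : 0 < p)]⟩
  simpa [Smu, abs_sub_comm] using abs_integral_sub_le_mul_Wp hp hμt hδ hg hgB x

end Smu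

section Iteration

variable {d : ℕ} {p : ℝ} {φ : ℝ≥0 → ℝ≥0∞} {μ : ℝ → Measure (Ed d)}

/-- `𝒮ⁿ(t)` is a composition of steps `S(σ)`, `σ ≥ 0`, whose durations add up to `t`. -/
lemma SiterN_induction {R : ℝ → (Ed d → ℝ) → (Ed d → ℝ) → Prop} (n : ℕ) {t : ℝ} (ht : 0 ≤ t)
    {f g : Ed d → ℝ} (h₀ : R 0 f g)
    (hstep : ∀ σ τ h h', 0 ≤ σ → 0 ≤ τ → R τ h h' →
      R (σ + τ) (Sop p φ (μ σ) σ h) (Sop p φ (μ σ) σ h')) :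
    R t (SiterN p φ μ n t f) (SiterN p φ μ n t g) := by
  set δ : ℝ := ((2 : ℝ) ^ n)⁻¹
  set k := ⌊(2 : ℝ) ^ n * t⌋₊
  have hδ : 0 ≤ δ := by positivity
  have hs : 0 ≤ t - k * δ := by
    have hk : (k : ℝ) ≤ 2 ^ n * t := Nat.floor_le (by positivity)
    have : (k : ℝ) * δ ≤ t := by
      simpa [δ, mul_comm (2 ^ n : ℝ) t] using mul_le_mul_of_nonneg_right hk hδ
    linarith
  have hiter (j : ℕ) : R (j * δ + (t - k * δ))
      ((fun h => Sop p φ (μ δ) δ h)^[j] (Sop p φ (μ (t - k * δ)) (t - k * δ) f))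
      ((fun h => Sop p φ (μ δ) δ h)^[j] (Sop p φ (μ (t - k * δ)) (t - k * δ) g)) := by
    induction j with
    | zero => simpa using hstep _ 0 f g hs le_rfl h₀
    | succ j ih =>
      rw [Function.iterate_succ_apply', Function.iterate_succ_apply']
      convert hstep δ _ _ _ hδ (by positivity) ih using 1
      push_cast
      ring
  have h := hiter k
  rwa [show (k : ℝ) * δ + (t - k * δ) = t by ring] at h

lemma abs_SiterN_sub_SiterN_le (hp : 0 < p) (hφ0 : φ 0 = 0) (hμ : ∀ t, 0 ≤ t → MemPp p (μ t))
    (n : ℕ) {t : ℝ} (ht : 0 ≤ t) {f g : Ed d → ℝ} {B C η : ℝ} (hf : UniformContinuous f)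
    (hfB : ∀ y, |f y| ≤ B) (hg : UniformContinuous g) (hgC : ∀ y, |g y| ≤ C)
    (hfg : ∀ y, |f y - g y| ≤ η) (x : Ed d) :
    |SiterN p φ μ n t f x - SiterN p φ μ n t g x| ≤ η := by
  refine (SiterN_induction (R := fun _ h h' => UniformContinuous h ∧ (∀ y, |h y| ≤ B) ∧
    UniformContinuous h' ∧ (∀ y, |h' y| ≤ C) ∧ ∀ y, |h y - h' y| ≤ η) n ht
    ⟨hf, hfB, hg, hgC, hfg⟩ ?_).2.2.2.2 x
  rintro σ - h h' hσ - ⟨hh, hhB, hh', hh'C, hhh'⟩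
  exact ⟨Sop_uniformContinuous hp hφ0 (hμ σ hσ) hh hhB, abs_Sop_le hp hφ0 (hμ σ hσ) hhB,
    Sop_uniformContinuous hp hφ0 (hμ σ hσ) hh' hh'C, abs_Sop_le hp hφ0 (hμ σ hσ) hh'C,
    abs_Sop_sub_Sop_le hp hφ0 (hμ σ hσ) hh.continuous hhB hh'.continuous hh'C hhh'⟩

/-- On `L`-Lipschitz functions `S^μ(σ) ≤ S(σ) ≤ S^μ(σ) + σ φ*(L)`; the semigroup property of
`S^μ` lets this sandwich pass through the composition. -/
lemma abs_SiterN_sub_Smu_le (hp : 1 ≤ p) (hφ0 : φ 0 = 0) (hμ : IsConvSemigroup p μ) (n : ℕ)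
    {t : ℝ} (ht : 0 ≤ t) {g : Ed d → ℝ} {B : ℝ} {L : ℝ≥0} (hg : LipschitzWith L g)
    (hgB : ∀ y, |g y| ≤ B) (hL : phiStar φ L ≠ ∞) (x : Ed d) :
    |SiterN p φ μ n t g x - Smu μ t g x| ≤ t * (phiStar φ L).toReal := by
  set M := (phiStar φ L).toReal
  have hp0 : 0 < p := by linarith
  have hμP (τ : ℝ) (hτ : 0 ≤ τ) : IsProbabilityMeasure (μ τ) := (hμ.2.2 τ hτ).1
  suffices hsand : Smu μ t g x ≤ SiterN p φ μ n t g x ∧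
      SiterN p φ μ n t g x ≤ Smu μ t g x + t * M by
    have : 0 ≤ t * M := mul_nonneg ht toReal_nonneg
    exact abs_sub_le_iff.2 ⟨by linarith, by linarith⟩
  refine (SiterN_induction (R := fun τ h _ => (∀ y, |h y| ≤ B) ∧ LipschitzWith L h ∧
    ∀ y, Smu μ τ g y ≤ h y ∧ h y ≤ Smu μ τ g y + τ * M) n ht (f := g) (g := g)
    ⟨hgB, hg, fun y => by simp [Smu_of_eq_dirac hμ.1]⟩ ?_).2.2 x
  rintro σ τ h - hσ hτ ⟨hhB, hh, hsand⟩
  have := hμP σ hσ; have := hμP τ hτ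
  have hSmu (y : Ed d) : Smu μ (σ + τ) g y = Smu μ σ (Smu μ τ g) y :=
    Smu_add (hμ.2.1 σ τ hσ hτ) hg.continuous hgB y
  have hSmuL : LipschitzWith L (Smu μ τ g) := Smu_lipschitzWith hg hgB
  refine ⟨abs_Sop_le hp0 hφ0 (hμ.2.2 σ hσ) hhB, Sop_lipschitzWith hp0 hφ0 (hμ.2.2 σ hσ) hh hhB,
    fun y => ⟨?_, ?_⟩⟩
  · calc Smu μ (σ + τ) g y ≤ Smu μ σ h y + 0 := by
          rw [hSmu]
          exact Smu_le_Smu_add hSmuL.continuous (abs_Smu_le hgB) hh.continuous hhB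
            (fun z => by linarith [(hsand z).1]) y
      _ ≤ Sop p φ (μ σ) σ h y := by
          rw [add_zero]; exact integral_le_Sop hp0 hφ0 (hμ.2.2 σ hσ) hhB y
  · calc Sop p φ (μ σ) σ h y ≤ Smu μ σ h y + σ * M :=
          Sop_le_integral_add hp hφ0 (hμ.2.2 σ hσ) hσ hh hhB hL y
      _ ≤ Smu μ σ (Smu μ τ g) y + τ * M + σ * M := by
          gcongr
          exact Smu_le_Smu_add hh.continuous hhB hSmuL.continuous (abs_Smu_le hgB)
            (fun z => (hsand z).2) y
      _ = Smu μ (σ + τ) g y + (σ + τ) * M := by rw [hSmu]; ring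

end Iteration

/-- The inf-convolution `x ↦ ⨅ y, f y + K * dist x y` approximates a bounded uniformly
continuous `f` once `K` is large enough. -/
lemma UniformContinuous.exists_lipschitzWith_abs_sub_le {α : Type*} [PseudoMetricSpace α]
    {f : α → ℝ} (hf : UniformContinuous f) {B : ℝ} (hfB : ∀ x, |f x| ≤ B) {ε : ℝ}
    (hε : 0 < ε) : ∃ (K : ℝ≥0) (g : α → ℝ), LipschitzWith K g ∧ ∀ x, |f x - g x| ≤ ε := by
  obtain ⟨δ, hδ, hδε⟩ := Metric.uniformContinuous_iff.1 hf ε hε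
  set K : ℝ≥0 := (2 * B / δ).toNNReal
  have hKδ : 2 * B ≤ K * δ := calc
    2 * B = 2 * B / δ * δ := by field_simp
    _ ≤ K * δ := by gcongr; exact Real.le_coe_toNNReal _
  have hbdd (x : α) : BddBelow (Set.range fun y => f y + K * dist x y) :=
    ⟨-B, by
      rintro _ ⟨y, rfl⟩
      nlinarith [(abs_le.1 (hfB y)).1, dist_nonneg (x := x) (y := y), K.coe_nonneg]⟩
  set g : α → ℝ := fun x => ⨅ y, f y + K * dist x y
  have hgf (x : α) : g x ≤ f x := by simpa using ciInf_le (hbdd x) x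
  refine ⟨K, g, .of_le_add_mul K fun x x' => ?_, fun x => ?_⟩
  · have : Nonempty α := ⟨x⟩
    rw [← sub_le_iff_le_add]
    refine le_ciInf fun y => ?_
    have := ciInf_le (hbdd x) y
    have := dist_triangle x x' y
    nlinarith [K.coe_nonneg]
  · have : Nonempty α := ⟨x⟩
    have hfg : f x - ε ≤ g x := le_ciInf fun y => by
      rcases lt_or_ge (dist x y) δ with hxy | hxy
      · have := (abs_lt.1 (Real.dist_eq _ _ ▸ hδε hxy)).2
        nlinarith [dist_nonneg (x := x) (y := y), K.coe_nonneg]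
      · nlinarith [(abs_le.1 (hfB x)).2, (abs_le.1 (hfB y)).1, K.coe_nonneg]
    exact abs_le.2 ⟨by linarith [hgf x], by linarith⟩

lemma tendsto_Wp_dirac_nhdsGE {d : ℕ} {p : ℝ} (hp : 0 < p) {μ : ℝ → Measure (Ed d)}
    (hμ0 : μ 0 = Measure.dirac 0) (hμ : WContinuousAtZero p μ) :
    Tendsto (fun t => Wp p (μ t) (Measure.dirac 0)) (𝓝[≥] 0) (𝓝 0) := by
  rw [← Ioi_insert, nhdsWithin_insert, tendsto_sup]
  refine ⟨?_, hμ⟩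
  simpa [hμ0, Wp_self hp] using tendsto_pure_nhds (fun t => Wp p (μ t) (Measure.dirac 0)) 0

theorem stmt_9_general (d : ℕ) (p : ℝ) (hp : 1 < p)
    (φ : ℝ≥0 → ℝ≥0∞) (hφ : IsPenalty p φ)
    (μ : ℝ → Measure (Ed d)) (hμ : IsConvSemigroup p μ) (hμ0 : WContinuousAtZero p μ)
    (f : C₀(Ed d, ℝ)) (tseq : ℕ → ℝ) (htseq : ∀ n, 0 ≤ tseq n)
    (hlim : Tendsto tseq atTop (𝓝 0)) :
    TendstoUniformly (fun n x => SiterN p φ μ n (tseq n) (⇑f) x) (⇑f) atTop := by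
  have hp0 : 0 < p := by linarith
  have hfu : UniformContinuous f := ZeroAtInftyContinuousMap.uniformContinuous f
  have hfB (x : Ed d) : |f x| ≤ ‖f.toBCF‖ := by
    simpa using BoundedContinuousFunction.norm_coe_le_norm f.toBCF x
  refine Metric.tendstoUniformly_iff.2 fun ε hε => ?_
  obtain ⟨L, g, hg, hfg⟩ :=
    hfu.exists_lipschitzWith_abs_sub_le hfB (by positivity : 0 < ε / 4)
  have hgB (x : Ed d) : |g x| ≤ ‖f.toBCF‖ + ε / 4 := by
    linarith [abs_sub_abs_le_abs_sub (g x) (f x), abs_sub_comm (g x) (f x), hfg x, hfB x]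
  set M := (phiStar φ L).toReal
  have herr : Tendsto (fun n => L * Wp p (μ (tseq n)) (Measure.dirac 0) + tseq n * M)
      atTop (𝓝 0) := by
    have hW := (tendsto_Wp_dirac_nhdsGE hp0 hμ.1 hμ0).comp
      (tendsto_nhdsWithin_iff.2 ⟨hlim, .of_forall htseq⟩)
    simpa using (hW.const_mul (L : ℝ)).add (hlim.mul_const M)
  filter_upwards [herr.eventually_lt_const (by positivity : (0 : ℝ) < ε / 2)] with n hn x
  have hfg' := abs_SiterN_sub_SiterN_le hp0 hφ.map_zero hμ.2.2 n (htseq n) hfu hfB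
    hg.uniformContinuous hgB hfg x
  have hSg := abs_SiterN_sub_Smu_le hp.le hφ.map_zero hμ n (htseq n) hg hgB
    (hφ.phiStar_lt_top hp L).ne x
  have hSmu := abs_Smu_sub_le hp.le (hμ.2.2 _ (htseq n)) hg hgB x
  rw [Real.dist_eq, abs_sub_lt_iff]
  constructor <;> linarith [abs_le.1 (hfg x), abs_le.1 hfg', abs_le.1 hSg, abs_le.1 hSmu]

/-- `‖𝒮ⁿ(tₙ)f − f‖_∞ → 0` for any sequence `tₙ ≥ 0` with `tₙ → 0`. -/
theorem stmt_9 (d : ℕ) (hd : 1 ≤ d) (p : ℝ) (hp : 1 < p)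
    (φ : ℝ≥0 → ℝ≥0∞) (hφ : IsPenalty p φ)
    (μ : ℝ → Measure (Ed d)) (hμ : IsConvSemigroup p μ) (hμ0 : WContinuousAtZero p μ)
    (f : C₀(Ed d, ℝ)) (tseq : ℕ → ℝ) (htseq : ∀ n, 0 ≤ tseq n)
    (hlim : Tendsto tseq atTop (𝓝 0)) :
    TendstoUniformly (fun n x => SiterN p φ μ n (tseq n) (⇑f) x) (⇑f) atTop :=
  stmt_9_general d p hp φ hφ μ hμ hμ0 f tseq htseq hlim
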